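/- Assume in addition the feasibility condition ∑_{i=1}^m ∫_0^T μ_{i,t} dt > 0. Then every positive solution (P₊, P₋) of the Riccati system satisfies P_{−,0} < 1. -/

import Mathlib

open MeasureTheory Set

/-- The Hamiltonian `H₊(t, v, P₊, P₋)` of the constrained LQ problem. -/
noncomputable def Hplus {E : Type} [MeasurableSpace E] {m n ℓ : ℕ}
    (μ : ℝ → Fin m → ℝ) (σ : ℝ → Matrix (Fin m) (Fin n) ℝ)
    (ν : Fin ℓ → Measure E) (β : Fin ℓ → ℝ → E → Fin m → ℝ)
    (t : ℝ) (v : Fin m → ℝ) (Pp Pm : ℝ) : ℝ :=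
  Pp * ∑ k, (∑ i, σ t i k * v i) ^ 2 + 2 * Pp * ∑ i, μ t i * v i
    + ∑ j, ∫ e, (Pp * ((max (1 + ∑ i, v i * β j t e i) 0) ^ 2
          - 1 - 2 * ∑ i, v i * β j t e i)
        + Pm * (max (-(1 + ∑ i, v i * β j t e i)) 0) ^ 2) ∂(ν j)

/-- The Hamiltonian `H₋(t, v, P₊, P₋)` of the constrained LQ problem. -/
noncomputable def Hminus {E : Type} [MeasurableSpace E] {m n ℓ : ℕ}
    (μ : ℝ → Fin m → ℝ) (σ : ℝ → Matrix (Fin m) (Fin n) ℝ)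
    (ν : Fin ℓ → Measure E) (β : Fin ℓ → ℝ → E → Fin m → ℝ)
    (t : ℝ) (v : Fin m → ℝ) (Pp Pm : ℝ) : ℝ :=
  Pm * ∑ k, (∑ i, σ t i k * v i) ^ 2 - 2 * Pm * ∑ i, μ t i * v i
    + ∑ j, ∫ e, (Pm * ((max (1 - ∑ i, v i * β j t e i) 0) ^ 2
          - 1 + 2 * ∑ i, v i * β j t e i)
        + Pp * (max (-(1 - ∑ i, v i * β j t e i)) 0) ^ 2) ∂(ν j)

/-- `H*₊(t, P₊, P₋) = inf_{v ∈ ℝ^m₊} H₊(t, v, P₊, P₋)`. -/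
noncomputable def HstarPlus {E : Type} [MeasurableSpace E] {m n ℓ : ℕ}
    (μ : ℝ → Fin m → ℝ) (σ : ℝ → Matrix (Fin m) (Fin n) ℝ)
    (ν : Fin ℓ → Measure E) (β : Fin ℓ → ℝ → E → Fin m → ℝ)
    (t : ℝ) (Pp Pm : ℝ) : ℝ :=
  sInf ((fun v => Hplus μ σ ν β t v Pp Pm) '' {v : Fin m → ℝ | ∀ i, 0 ≤ v i})

/-- `H*₋(t, P₊, P₋) = inf_{v ∈ ℝ^m₊} H₋(t, v, P₊, P₋)`. -/
noncomputable def HstarMinus {E : Type} [MeasurableSpace E] {m n ℓ : ℕ}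
    (μ : ℝ → Fin m → ℝ) (σ : ℝ → Matrix (Fin m) (Fin n) ℝ)
    (ν : Fin ℓ → Measure E) (β : Fin ℓ → ℝ → E → Fin m → ℝ)
    (t : ℝ) (Pp Pm : ℝ) : ℝ :=
  sInf ((fun v => Hminus μ σ ν β t v Pp Pm) '' {v : Fin m → ℝ | ∀ i, 0 ≤ v i})

/-- `Σ_t = σ_t σ_tᵀ + ∑_j ∫_E β_{j,t}(e) β_{j,t}(e)ᵀ ν_j(de)`, defined entrywise. -/
noncomputable def SigmaMat {E : Type} [MeasurableSpace E] {m n ℓ : ℕ}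
    (σ : ℝ → Matrix (Fin m) (Fin n) ℝ) (ν : Fin ℓ → Measure E)
    (β : Fin ℓ → ℝ → E → Fin m → ℝ) (t : ℝ) : Matrix (Fin m) (Fin m) ℝ :=
  Matrix.of fun i k => (∑ j', σ t i j' * σ t k j') + ∑ j, ∫ e, β j t e i * β j t e k ∂(ν j)

/-- A pair of continuous positive functions `(P₊, P₋)` on `[0,T]` solving the Riccati
system `P_{±,t} = 1 + ∫_t^T H*_±(s, P_{+,s}, P_{−,s}) ds`. -/
def IsPositiveRiccatiSolution {E : Type} [MeasurableSpace E] {m n ℓ : ℕ}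
    (μ : ℝ → Fin m → ℝ) (σ : ℝ → Matrix (Fin m) (Fin n) ℝ)
    (ν : Fin ℓ → Measure E) (β : Fin ℓ → ℝ → E → Fin m → ℝ)
    (T : ℝ) (Pp Pm : ℝ → ℝ) : Prop :=
  ContinuousOn Pp (Icc 0 T) ∧ ContinuousOn Pm (Icc 0 T) ∧
  (∀ t ∈ Icc (0:ℝ) T, 0 < Pp t ∧ 0 < Pm t) ∧
  (∀ t ∈ Icc (0:ℝ) T, Pp t = 1 + ∫ s in t..T, HstarPlus μ σ ν β s (Pp s) (Pm s)) ∧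
  (∀ t ∈ Icc (0:ℝ) T, Pm t = 1 + ∫ s in t..T, HstarMinus μ σ ν β s (Pp s) (Pm s))

/-
At `v = 0` the Hamiltonian `H₋` vanishes, so `H*₋ ≤ 0`. Uniform ellipticity, together with the
bounds of `P₊, P₋` on the compact interval `[0,T]`, bounds `H₋` below uniformly in `(t, v)`;
without such a bound `sInf` would return the junk value `0`. Since `H₋` is continuous in `v`, the
infimum over `ℝᵐ₊` is one over a countable dense subset, so `t ↦ H*₋(t, P₊(t), P₋(t))` is
measurable, hence integrable. Feasibility yields an index `i` with `μᵢ > 0` on a set of positive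
measure, and there `H₋(t, ε eᵢ) ≤ ε² A - 2 ε P₋(t) μᵢ(t) < 0` for some `A ≥ 0` and small `ε > 0`.
Hence `∫₀ᵀ H*₋ < 0`, i.e. `P₋(0) < 1`.
-/

open Filter

lemma neg_sq_div_le_mul_sq_sub {a : ℝ} (ha : 0 < a) (b y : ℝ) :
    -(b ^ 2 / a) ≤ a * y ^ 2 - 2 * b * y := by
  have h : 0 ≤ (a * y - b) ^ 2 / a := by positivity
  have he : (a * y - b) ^ 2 / a = a * y ^ 2 - 2 * b * y + b ^ 2 / a := by field_simp; ring
  linarith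

lemma abs_sum_mul_le {m : ℕ} {b : Fin m → ℝ} {C : ℝ} (hb : ∀ i, |b i| ≤ C) (v : Fin m → ℝ) :
    |∑ i, v i * b i| ≤ C * ∑ i, |v i| := by
  rw [Finset.mul_sum]
  refine (Finset.abs_sum_le_sum_abs _ _).trans (Finset.sum_le_sum fun i _ => ?_)
  rw [abs_mul, mul_comm]
  exact mul_le_mul_of_nonneg_right (hb i) (abs_nonneg _)

lemma csInf_image_eq_of_subset_closure {X : Type*} [TopologicalSpace X] {g : X → ℝ}
    {K D : Set X} (hg : Continuous g) (hDK : D ⊆ K) (hKD : K ⊆ closure D)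
    (hbdd : BddBelow (g '' K)) : sInf (g '' K) = sInf (g '' D) := by
  rcases K.eq_empty_or_nonempty with rfl | hK
  · rw [subset_empty_iff.1 hDK]
  have hD : D.Nonempty := by
    obtain ⟨v, hv⟩ := hK
    exact closure_nonempty_iff.1 ⟨v, hKD hv⟩
  refine le_antisymm (csInf_le_csInf hbdd (hD.image g) (image_mono hDK)) ?_
  refine le_csInf (hK.image g) ?_
  rintro _ ⟨v, hv, rfl⟩
  have hclosed : IsClosed {y : ℝ | sInf (g '' D) ≤ y} :=
    isClosed_le continuous_const continuous_id
  have hsub : g '' D ⊆ {y | sInf (g '' D) ≤ y} := fun y hy =>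
    csInf_le (hbdd.mono (image_mono hDK)) hy
  exact hclosed.closure_subset_iff.2 hsub
    (image_closure_subset_closure_image hg ⟨v, hKD hv, rfl⟩)

lemma measure_pos_of_setIntegral_pos {α : Type*} [MeasurableSpace α] {ρ : Measure α}
    {s : Set α} (hs : MeasurableSet s) {g : α → ℝ} (h : 0 < ∫ x in s, g x ∂ρ) :
    0 < ρ ({x | 0 < g x} ∩ s) := by
  refine pos_iff_ne_zero.2 fun h0 => (integral_nonpos_of_ae ?_).not_gt h
  rw [EventuallyLE, ae_iff, Measure.restrict_apply' hs]
  simpa using h0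

lemma setIntegral_neg_of_nonpos {α : Type*} [MeasurableSpace α] {ρ : Measure α} {s : Set α}
    (hs : MeasurableSet s) {f : α → ℝ} (hf : IntegrableOn f s ρ) (hle : ∀ x ∈ s, f x ≤ 0)
    (hlt : 0 < ρ ({x | f x < 0} ∩ s)) : ∫ x in s, f x ∂ρ < 0 := by
  have hpos := (setIntegral_pos_iff_support_of_nonneg_ae (f := fun x => -f x)
    (ae_restrict_of_forall_mem hs fun x hx => neg_nonneg.2 (hle x hx)) hf.neg).2
    (hlt.trans_le (measure_mono (inter_subset_inter_left _ fun x hx => neg_ne_zero.2 hx.ne)))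
  rw [integral_neg] at hpos
  linarith

lemma integrable_comp_sum_mul {E : Type*} [MeasurableSpace E] {m : ℕ} (ν : Measure E)
    [IsFiniteMeasure ν] {φ : ℝ → ℝ} (hφ : Continuous φ) {b : E → Fin m → ℝ} (hb : Measurable b)
    {C : ℝ} (hC : ∀ e i, |b e i| ≤ C) (v : Fin m → ℝ) :
    Integrable (fun e => φ (∑ i, v i * b e i)) ν := by
  obtain ⟨B, hB⟩ := (isCompact_Icc (a := -(C * ∑ i, |v i|)) (b := C * ∑ i, |v i|)
    ).exists_bound_of_continuousOn hφ.continuousOn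
  refine Integrable.of_bound (by fun_prop) B (ae_of_all _ fun e => hB _ ?_)
  exact abs_le.1 (abs_sum_mul_le (hC e) v)

lemma continuous_integral_comp_sum_mul {E : Type*} [MeasurableSpace E] {m : ℕ} (ν : Measure E)
    [IsFiniteMeasure ν] {φ : ℝ → ℝ} (hφ : Continuous φ) {b : E → Fin m → ℝ} (hb : Measurable b)
    {C : ℝ} (hC : ∀ e i, |b e i| ≤ C) :
    Continuous fun v : Fin m → ℝ => ∫ e, φ (∑ i, v i * b e i) ∂ν := by
  refine continuous_iff_continuousAt.2 fun v₀ => ?_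
  set R := |C| * (m * (‖v₀‖ + 1))
  obtain ⟨B, hB⟩ :=
    (isCompact_Icc (a := -R) (b := R)).exists_bound_of_continuousOn hφ.continuousOn
  have hball : ∀ v ∈ Metric.ball v₀ 1, ∀ e, |∑ i, v i * b e i| ≤ R := by
    intro v hv e
    have hv' : ∀ i, |v i| ≤ ‖v₀‖ + 1 := fun i => (norm_le_pi_norm v i).trans
      (by linarith [norm_le_norm_add_norm_sub' v v₀, mem_ball_iff_norm.1 hv])
    calc |∑ i, v i * b e i| ≤ C * ∑ i, |v i| := abs_sum_mul_le (hC e) v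
      _ ≤ |C| * ∑ i, |v i| := mul_le_mul_of_nonneg_right (le_abs_self C) (by positivity)
      _ ≤ R := mul_le_mul_of_nonneg_left (by
          simpa [mul_add] using Finset.sum_le_sum fun i (_ : i ∈ Finset.univ) => hv' i)
          (abs_nonneg C)
  refine continuousAt_of_dominated (bound := fun _ => B)
    (Eventually.of_forall fun v => by fun_prop) ?_ (integrable_const B) (ae_of_all _ fun e =>
      (hφ.comp (continuous_finsetSum _ fun i _ => by fun_prop)).continuousAt)
  filter_upwards [Metric.ball_mem_nhds v₀ one_pos] with v hv
  exact ae_of_all _ fun e => hB _ (abs_le.1 (hball v hv e))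

def jumpCost (P Q x : ℝ) : ℝ :=
  P * ((max (1 - x) 0) ^ 2 - 1 + 2 * x) + Q * (max (-(1 - x)) 0) ^ 2

lemma jumpCost_zero (P Q : ℝ) : jumpCost P Q 0 = 0 := by
  simp [jumpCost]

lemma mul_sq_le_jumpCost {c P Q : ℝ} (hcP : c ≤ P) (hcQ : c ≤ Q) (x : ℝ) :
    c * x ^ 2 ≤ jumpCost P Q x := by
  rcases le_total x 1 with h | h
  · rw [jumpCost, max_eq_left (by linarith), max_eq_right (by linarith)]
    nlinarith [mul_le_mul_of_nonneg_right hcP (sq_nonneg x)]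
  · rw [jumpCost, max_eq_right (by linarith), max_eq_left (by linarith)]
    nlinarith [mul_le_mul_of_nonneg_right hcQ (sq_nonneg (x - 1)),
      mul_le_mul_of_nonneg_right hcP (by linarith : (0:ℝ) ≤ 2 * x - 1)]

lemma jumpCost_le {P Q : ℝ} (hP : 0 ≤ P) (hQ : 0 ≤ Q) (x : ℝ) :
    jumpCost P Q x ≤ (P + Q) * x ^ 2 := by
  rcases le_total x 1 with h | h
  · rw [jumpCost, max_eq_left (by linarith), max_eq_right (by linarith)]
    nlinarith [mul_nonneg hQ (sq_nonneg x)]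
  · rw [jumpCost, max_eq_right (by linarith), max_eq_left (by linarith)]
    nlinarith [mul_nonneg hP (sq_nonneg (x - 1)),
      mul_nonneg hQ (by linarith : (0:ℝ) ≤ 2 * x - 1)]

lemma continuous_jumpCost (P Q : ℝ) : Continuous (jumpCost P Q) := by
  unfold jumpCost; fun_prop

section FixedTime

variable {E : Type} [MeasurableSpace E] {m n ℓ : ℕ} {μ : ℝ → Fin m → ℝ}
  {σ : ℝ → Matrix (Fin m) (Fin n) ℝ} {ν : Fin ℓ → Measure E} {β : Fin ℓ → ℝ → E → Fin m → ℝ}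
  {t C : ℝ}

lemma Hminus_eq (v : Fin m → ℝ) (P Q : ℝ) :
    Hminus μ σ ν β t v P Q = Q * ∑ k, (∑ i, σ t i k * v i) ^ 2 - 2 * Q * ∑ i, μ t i * v i
      + ∑ j, ∫ e, jumpCost Q P (∑ i, v i * β j t e i) ∂ν j := rfl

lemma Hminus_zero (P Q : ℝ) : Hminus μ σ ν β t 0 P Q = 0 := by
  simp [Hminus_eq, jumpCost_zero]

lemma bddBelow_Hminus_image {P Q a : ℝ} (h : ∀ v : Fin m → ℝ, a ≤ Hminus μ σ ν β t v P Q) :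
    BddBelow ((fun v => Hminus μ σ ν β t v P Q) '' {v | ∀ i, 0 ≤ v i}) :=
  ⟨a, by rintro _ ⟨v, -, rfl⟩; exact h v⟩

lemma HstarMinus_le {P Q a : ℝ} (h : ∀ v : Fin m → ℝ, a ≤ Hminus μ σ ν β t v P Q)
    {v : Fin m → ℝ} (hv : ∀ i, 0 ≤ v i) : HstarMinus μ σ ν β t P Q ≤ Hminus μ σ ν β t v P Q :=
  csInf_le (bddBelow_Hminus_image h) ⟨v, hv, rfl⟩

lemma HstarMinus_nonpos {P Q a : ℝ} (h : ∀ v : Fin m → ℝ, a ≤ Hminus μ σ ν β t v P Q) :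
    HstarMinus μ σ ν β t P Q ≤ 0 :=
  (HstarMinus_le h fun _ => le_rfl).trans_eq (Hminus_zero P Q)

lemma le_HstarMinus {P Q a : ℝ} (h : ∀ v : Fin m → ℝ, a ≤ Hminus μ σ ν β t v P Q) :
    a ≤ HstarMinus μ σ ν β t P Q :=
  le_csInf ⟨_, 0, fun _ => le_rfl, rfl⟩ fun _ ⟨v, _, hv⟩ => hv ▸ h v

variable [∀ j, IsFiniteMeasure (ν j)]

lemma continuous_Hminus (hβ : ∀ j, Measurable (β j t)) (hC : ∀ j e i, |β j t e i| ≤ C)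
    (P Q : ℝ) : Continuous fun v => Hminus μ σ ν β t v P Q := by
  simp only [Hminus_eq]
  refine Continuous.add (by fun_prop) (continuous_finsetSum _ fun j _ => ?_)
  exact continuous_integral_comp_sum_mul (ν j) (continuous_jumpCost Q P) (hβ j) (hC j)

lemma sum_sq_add_integral_sq_eq (hβ : ∀ j, Measurable (β j t)) (hC : ∀ j e i, |β j t e i| ≤ C)
    (v : Fin m → ℝ) :
    ∑ k, (∑ i, σ t i k * v i) ^ 2 + ∑ j, ∫ e, (∑ i, v i * β j t e i) ^ 2 ∂ν j
      = ∑ i, ∑ k, v i * SigmaMat σ ν β t i k * v k := by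
  have hint : ∀ j i k, Integrable (fun e => v i * β j t e i * (v k * β j t e k)) (ν j) := by
    intro j i k
    refine Integrable.of_bound (by fun_prop) (|v i| * C * (|v k| * C)) (ae_of_all _ fun e => ?_)
    have hC0 : 0 ≤ C := (abs_nonneg _).trans (hC j e i)
    rw [Real.norm_eq_abs, abs_mul, abs_mul, abs_mul]
    gcongr <;> exact hC j e _
  have hsq : ∀ j, ∫ e, (∑ i, v i * β j t e i) ^ 2 ∂ν j
      = ∑ i, ∑ k, v i * (∫ e, β j t e i * β j t e k ∂ν j) * v k := by
    intro j
    simp_rw [sq, Finset.sum_mul_sum]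
    rw [integral_finsetSum _ fun i _ => integrable_finsetSum _ fun k _ => hint j i k]
    refine Finset.sum_congr rfl fun i _ => ?_
    rw [integral_finsetSum _ fun k _ => hint j i k]
    refine Finset.sum_congr rfl fun k _ => ?_
    rw [← integral_const_mul, ← integral_mul_const]
    congr 1; funext e; ring
  simp only [Finset.sum_congr rfl fun j _ => hsq j, SigmaMat, Matrix.of_apply, mul_add, add_mul,
    Finset.sum_add_distrib]
  congr 1
  · simp only [sq, Finset.mul_sum, Finset.sum_mul]
    rw [Finset.sum_comm]
    refine Finset.sum_congr rfl fun i _ => ?_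
    rw [Finset.sum_comm]
    exact Finset.sum_congr rfl fun k _ => Finset.sum_congr rfl fun l _ => by ring
  · simp only [Finset.mul_sum, Finset.sum_mul]
    rw [Finset.sum_comm]
    exact Finset.sum_congr rfl fun i _ => Finset.sum_comm

lemma neg_sum_div_le_Hminus {c δ P Q : ℝ} (hc : 0 < c) (hcP : c ≤ P) (hcQ : c ≤ Q) (hδ : 0 < δ)
    (hβ : ∀ j, Measurable (β j t)) (hC : ∀ j e i, |β j t e i| ≤ C) {v : Fin m → ℝ}
    (hell : δ * ∑ i, v i ^ 2 ≤ ∑ i, ∑ k, v i * SigmaMat σ ν β t i k * v k) :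
    -∑ i, (Q * μ t i) ^ 2 / (c * δ) ≤ Hminus μ σ ν β t v P Q := by
  have hjump : ∀ j, c * ∫ e, (∑ i, v i * β j t e i) ^ 2 ∂ν j
      ≤ ∫ e, jumpCost Q P (∑ i, v i * β j t e i) ∂ν j := fun j => by
    rw [← integral_const_mul]
    exact integral_mono
      ((integrable_comp_sum_mul (ν j) (continuous_pow 2) (hβ j) (hC j) v).const_mul c)
      (integrable_comp_sum_mul (ν j) (continuous_jumpCost Q P) (hβ j) (hC j) v)
      fun e => mul_sq_le_jumpCost hcQ hcP _
  have hjumps : c * ∑ j, ∫ e, (∑ i, v i * β j t e i) ^ 2 ∂ν j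
      ≤ ∑ j, ∫ e, jumpCost Q P (∑ i, v i * β j t e i) ∂ν j := by
    rw [Finset.mul_sum]; exact Finset.sum_le_sum fun j _ => hjump j
  have hdiff : c * ∑ k, (∑ i, σ t i k * v i) ^ 2 ≤ Q * ∑ k, (∑ i, σ t i k * v i) ^ 2 :=
    mul_le_mul_of_nonneg_right hcQ (by positivity)
  calc -∑ i, (Q * μ t i) ^ 2 / (c * δ)
      ≤ ∑ i, (c * δ * v i ^ 2 - 2 * (Q * μ t i) * v i) := by
        rw [← Finset.sum_neg_distrib]
        exact Finset.sum_le_sum fun i _ => neg_sq_div_le_mul_sq_sub (by positivity) _ _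
    _ = c * (δ * ∑ i, v i ^ 2) - 2 * Q * ∑ i, μ t i * v i := by
        simp only [Finset.sum_sub_distrib, Finset.mul_sum]; ring_nf
    _ ≤ c * (∑ k, (∑ i, σ t i k * v i) ^ 2 + ∑ j, ∫ e, (∑ i, v i * β j t e i) ^ 2 ∂ν j)
          - 2 * Q * ∑ i, μ t i * v i := by
        rw [sum_sq_add_integral_sq_eq hβ hC v]; gcongr
    _ ≤ Hminus μ σ ν β t v P Q := by
        rw [Hminus_eq]; linarith

lemma Hminus_le {P Q : ℝ} (hP : 0 ≤ P) (hQ : 0 ≤ Q) (hβ : ∀ j, Measurable (β j t))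
    (hC : ∀ j e i, |β j t e i| ≤ C) (v : Fin m → ℝ) :
    Hminus μ σ ν β t v P Q ≤ Q * ∑ k, (∑ i, σ t i k * v i) ^ 2
      + (Q + P) * ∑ j, ∫ e, (∑ i, v i * β j t e i) ^ 2 ∂ν j - 2 * Q * ∑ i, μ t i * v i := by
  have hjump : ∀ j, ∫ e, jumpCost Q P (∑ i, v i * β j t e i) ∂ν j
      ≤ (Q + P) * ∫ e, (∑ i, v i * β j t e i) ^ 2 ∂ν j := fun j => by
    rw [← integral_const_mul]
    exact integral_mono
      (integrable_comp_sum_mul (ν j) (continuous_jumpCost Q P) (hβ j) (hC j) v)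
      ((integrable_comp_sum_mul (ν j) (continuous_pow 2) (hβ j) (hC j) v).const_mul _)
      fun e => jumpCost_le hQ hP _
  have hjumps : ∑ j, ∫ e, jumpCost Q P (∑ i, v i * β j t e i) ∂ν j
      ≤ (Q + P) * ∑ j, ∫ e, (∑ i, v i * β j t e i) ^ 2 ∂ν j := by
    rw [Finset.mul_sum]; exact Finset.sum_le_sum fun j _ => hjump j
  rw [Hminus_eq]; linarith

lemma exists_Hminus_smul_neg {P Q : ℝ} (hP : 0 ≤ P) (hQ : 0 < Q)
    (hβ : ∀ j, Measurable (β j t)) (hC : ∀ j e i, |β j t e i| ≤ C) {v : Fin m → ℝ}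
    (hμv : 0 < ∑ i, μ t i * v i) :
    ∃ ε : ℝ, 0 < ε ∧ Hminus μ σ ν β t (ε • v) P Q < 0 := by
  set A := Q * ∑ k, (∑ i, σ t i k * v i) ^ 2
    + (Q + P) * ∑ j, ∫ e, (∑ i, v i * β j t e i) ^ 2 ∂ν j
  set b := Q * ∑ i, μ t i * v i
  have hA : 0 ≤ A := add_nonneg (mul_nonneg hQ.le (by positivity)) (mul_nonneg (by linarith)
    (Finset.sum_nonneg fun j _ => integral_nonneg fun e => sq_nonneg _))
  have hb : 0 < b := mul_pos hQ hμv
  have hscale : ∀ ε : ℝ, Hminus μ σ ν β t (ε • v) P Q ≤ ε ^ 2 * A - 2 * ε * b := fun ε => by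
    refine (Hminus_le hP hQ.le hβ hC _).trans_eq ?_
    simp only [A, b, Pi.smul_apply, smul_eq_mul, mul_left_comm _ ε, mul_assoc ε,
      ← Finset.mul_sum, mul_pow, integral_const_mul]
    ring
  refine ⟨b / (A + 1), by positivity, (hscale _).trans_lt ?_⟩
  have : b / (A + 1) * A < b := by
    rw [div_mul_eq_mul_div, div_lt_iff₀ (by positivity)]; nlinarith
  nlinarith [div_pos hb (by positivity : (0:ℝ) < A + 1)]

lemma HstarMinus_eq_iInf {D : Set (Fin m → ℝ)} (hDK : D ⊆ {v | ∀ i, 0 ≤ v i})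
    (hKD : {v | ∀ i, 0 ≤ v i} ⊆ closure D) (hβ : ∀ j, Measurable (β j t))
    (hC : ∀ j e i, |β j t e i| ≤ C) {P Q a : ℝ} (h : ∀ v : Fin m → ℝ, a ≤ Hminus μ σ ν β t v P Q) :
    HstarMinus μ σ ν β t P Q = ⨅ d : D, Hminus μ σ ν β t d P Q := by
  rw [HstarMinus, csInf_image_eq_of_subset_closure (continuous_Hminus hβ hC P Q) hDK hKD
    (bddBelow_Hminus_image h), sInf_image']

end FixedTime

section TimeDependent

variable {E : Type} [MeasurableSpace E] {m n ℓ : ℕ} {μ : ℝ → Fin m → ℝ}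
  {σ : ℝ → Matrix (Fin m) (Fin n) ℝ} {ν : Fin ℓ → Measure E} {β : Fin ℓ → ℝ → E → Fin m → ℝ}
  [∀ j, IsFiniteMeasure (ν j)] {P Q : ℝ → ℝ} {T Cβ M : ℝ}

lemma measurable_Hminus (hμ : Measurable μ) (hσ : ∀ i k, Measurable fun t => σ t i k)
    (hβ : ∀ j, Measurable (Function.uncurry (β j))) (hP : Measurable P) (hQ : Measurable Q)
    (v : Fin m → ℝ) : Measurable fun t => Hminus μ σ ν β t v (P t) (Q t) := by
  simp only [Hminus_eq]
  refine Measurable.add (by fun_prop) (Finset.measurable_sum _ fun j _ => ?_)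
  have hβi : ∀ i, Measurable fun p : ℝ × E => β j p.1 p.2 i :=
    fun i => (measurable_pi_apply i).comp (hβ j)
  have hjump :
      Measurable fun p : ℝ × E => jumpCost (Q p.1) (P p.1) (∑ i, v i * β j p.1 p.2 i) := by
    simp only [jumpCost]; fun_prop
  exact hjump.stronglyMeasurable.integral_prod_right'.measurable

lemma aestronglyMeasurable_HstarMinus {ρ : Measure ℝ} (hμ : Measurable μ)
    (hσ : ∀ i k, Measurable fun t => σ t i k) (hβ : ∀ j, Measurable (Function.uncurry (β j)))
    (hβC : ∀ᵐ t ∂ρ, ∀ j e i, |β j t e i| ≤ Cβ) (hP : AEMeasurable P ρ) (hQ : AEMeasurable Q ρ)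
    (hM : ∀ᵐ t ∂ρ, ∀ v, -M ≤ Hminus μ σ ν β t v (P t) (Q t)) :
    AEStronglyMeasurable (fun t => HstarMinus μ σ ν β t (P t) (Q t)) ρ := by
  obtain ⟨D, hDK, hDc, hKD⟩ := (TopologicalSpace.IsSeparable.of_separableSpace
    {v : Fin m → ℝ | ∀ i, 0 ≤ v i}).exists_countable_dense_subset
  have := hDc.to_subtype
  have hmeas : Measurable fun t => ⨅ d : D, Hminus μ σ ν β t d (hP.mk P t) (hQ.mk Q t) :=
    Measurable.iInf fun d => measurable_Hminus hμ hσ hβ hP.measurable_mk hQ.measurable_mk d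
  refine hmeas.aestronglyMeasurable.congr ?_
  filter_upwards [hβC, hM, hP.ae_eq_mk, hQ.ae_eq_mk] with t hCt hMt hPt hQt
  rw [← hPt, ← hQt]
  exact (HstarMinus_eq_iInf hDK hKD (fun j => (hβ j).comp measurable_prodMk_left) hCt hMt).symm

lemma exists_forall_neg_le_Hminus {Cμ δ : ℝ} (hμC : ∀ t ∈ Icc (0:ℝ) T, ∀ i, |μ t i| ≤ Cμ)
    (hβ : ∀ j t, Measurable (β j t)) (hβC : ∀ j, ∀ t ∈ Icc (0:ℝ) T, ∀ e i, |β j t e i| ≤ Cβ)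
    (hδ : 0 < δ) (hell : ∀ t ∈ Icc (0:ℝ) T, ∀ v : Fin m → ℝ,
      δ * ∑ i, v i ^ 2 ≤ ∑ i, ∑ k, v i * SigmaMat σ ν β t i k * v k)
    (hPc : ContinuousOn P (Icc 0 T)) (hQc : ContinuousOn Q (Icc 0 T))
    (hpos : ∀ t ∈ Icc (0:ℝ) T, 0 < P t ∧ 0 < Q t) :
    ∃ M, ∀ t ∈ Icc (0:ℝ) T, ∀ v, -M ≤ Hminus μ σ ν β t v (P t) (Q t) := by
  rcases (Icc (0:ℝ) T).eq_empty_or_nonempty with hempty | hne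
  · exact ⟨0, by simp [hempty]⟩
  obtain ⟨t₁, ht₁, hP₁⟩ := isCompact_Icc.exists_isMinOn hne hPc
  obtain ⟨t₂, ht₂, hQ₂⟩ := isCompact_Icc.exists_isMinOn hne hQc
  obtain ⟨t₃, ht₃, hQ₃⟩ := isCompact_Icc.exists_isMaxOn hne hQc
  set c := min (P t₁) (Q t₂)
  have hc : 0 < c := lt_min (hpos t₁ ht₁).1 (hpos t₂ ht₂).2
  refine ⟨∑ _i : Fin m, (Q t₃ * Cμ) ^ 2 / (c * δ), fun t ht v => le_trans ?_
    (neg_sum_div_le_Hminus hc ((min_le_left _ _).trans (isMinOn_iff.1 hP₁ t ht))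
      ((min_le_right _ _).trans (isMinOn_iff.1 hQ₂ t ht)) hδ (hβ · t) (hβC · t ht)
      (hell t ht v))⟩
  refine neg_le_neg (Finset.sum_le_sum fun i _ => ?_)
  rw [← sq_abs (Q t * μ t i), abs_mul, abs_of_pos (hpos t ht).2]
  have hQμ : Q t * |μ t i| ≤ Q t₃ * Cμ :=
    mul_le_mul (isMaxOn_iff.1 hQ₃ t ht) (hμC t ht i) (abs_nonneg _) (hpos t₃ ht₃).2.le
  exact div_le_div_of_nonneg_right
    (pow_le_pow_left₀ (mul_nonneg (hpos t ht).2.le (abs_nonneg _)) hQμ 2) (by positivity)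

lemma integrableOn_HstarMinus (hμ : Measurable μ) (hσ : ∀ i k, Measurable fun t => σ t i k)
    (hβ : ∀ j, Measurable (Function.uncurry (β j)))
    (hβC : ∀ j, ∀ t ∈ Icc (0:ℝ) T, ∀ e i, |β j t e i| ≤ Cβ)
    (hPc : ContinuousOn P (Icc 0 T)) (hQc : ContinuousOn Q (Icc 0 T))
    (hM : ∀ t ∈ Icc (0:ℝ) T, ∀ v, -M ≤ Hminus μ σ ν β t v (P t) (Q t)) :
    IntegrableOn (fun t => HstarMinus μ σ ν β t (P t) (Q t)) (Icc 0 T) := by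
  refine IntegrableOn.of_bound measure_Icc_lt_top (aestronglyMeasurable_HstarMinus hμ hσ hβ
      (ae_restrict_of_forall_mem measurableSet_Icc fun t ht j => hβC j t ht)
      (hPc.aemeasurable measurableSet_Icc) (hQc.aemeasurable measurableSet_Icc)
      (ae_restrict_of_forall_mem measurableSet_Icc hM)) M
    (ae_restrict_of_forall_mem measurableSet_Icc fun t ht => ?_)
  have hM0 : -M ≤ 0 := (hM t ht 0).trans_eq (Hminus_zero _ _)
  rw [Real.norm_eq_abs, abs_le]
  exact ⟨le_HstarMinus (hM t ht), (HstarMinus_nonpos (hM t ht)).trans (by linarith)⟩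

end TimeDependent

theorem stmt4_general {E : Type} [MeasurableSpace E] {m n ℓ : ℕ}
    (T : ℝ) (hT : 0 < T)
    (μ : ℝ → Fin m → ℝ) (σ : ℝ → Matrix (Fin m) (Fin n) ℝ)
    (ν : Fin ℓ → Measure E) [∀ j, IsFiniteMeasure (ν j)]
    (β : Fin ℓ → ℝ → E → Fin m → ℝ)
    (hμmeas : Measurable μ) (hμbd : ∃ C, ∀ t ∈ Icc (0:ℝ) T, ∀ i, |μ t i| ≤ C)
    (hσmeas : ∀ i k, Measurable fun t => σ t i k)
    (hβmeas : ∀ j, Measurable (Function.uncurry (β j)))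
    (hβbd : ∃ C, ∀ j, ∀ t ∈ Icc (0:ℝ) T, ∀ e i, |β j t e i| ≤ C)
    (δ : ℝ) (hδ : 0 < δ)
    (hell : ∀ t ∈ Icc (0:ℝ) T, ∀ v : Fin m → ℝ,
      δ * ∑ i, v i ^ 2 ≤ ∑ i, ∑ k, v i * SigmaMat σ ν β t i k * v k)
    (hfeas : 0 < ∑ i, ∫ t in (0:ℝ)..T, μ t i)
    (Pp Pm : ℝ → ℝ)
    (hsol : IsPositiveRiccatiSolution μ σ ν β T Pp Pm) :
    Pm 0 < 1 := by
  obtain ⟨hPpc, hPmc, hpos, -, hPmeq⟩ := hsol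
  obtain ⟨Cμ, hCμ⟩ := hμbd
  obtain ⟨Cβ, hCβ⟩ := hβbd
  have hβt : ∀ j t, Measurable (β j t) := fun j t => (hβmeas j).comp measurable_prodMk_left
  obtain ⟨M, hM⟩ := exists_forall_neg_le_Hminus hCμ hβt hCβ hδ hell hPpc hPmc hpos
  obtain ⟨i, -, hi⟩ := Finset.exists_lt_of_sum_lt (s := Finset.univ) (f := fun _ => (0:ℝ))
    (by simpa using hfeas)
  have hneg : ∀ t ∈ Icc (0:ℝ) T, 0 < μ t i → HstarMinus μ σ ν β t (Pp t) (Pm t) < 0 := by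
    intro t ht hμt
    obtain ⟨ε, hε, hlt⟩ := exists_Hminus_smul_neg (μ := μ) (σ := σ) (ν := ν) (hpos t ht).1.le
      (hpos t ht).2 (hβt · t) (hCβ · t ht) (v := Pi.single i 1)
      (by simpa [Pi.single_apply] using hμt)
    have hv : 0 ≤ ε • Pi.single i (1:ℝ) := smul_nonneg hε.le (Pi.single_nonneg.2 zero_le_one)
    exact (HstarMinus_le (hM t ht) hv).trans_lt hlt
  have hvol : 0 < volume ({t | 0 < μ t i} ∩ Ioc 0 T) :=
    measure_pos_of_setIntegral_pos measurableSet_Ioc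
      (by rwa [← intervalIntegral.integral_of_le hT.le])
  have hint : ∫ t in (0:ℝ)..T, HstarMinus μ σ ν β t (Pp t) (Pm t) < 0 := by
    rw [intervalIntegral.integral_of_le hT.le]
    refine setIntegral_neg_of_nonpos measurableSet_Ioc
      ((integrableOn_HstarMinus hμmeas hσmeas hβmeas hCβ hPpc hPmc hM).mono_set
        Ioc_subset_Icc_self)
      (fun t ht => HstarMinus_nonpos (hM t (Ioc_subset_Icc_self ht)))
      (hvol.trans_le (measure_mono fun t ht => ⟨hneg t (Ioc_subset_Icc_self ht.2) ht.1, ht.2⟩))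
  rw [hPmeq 0 ⟨le_rfl, hT.le⟩]
  linarith

/-- under the feasibility condition `∑_i ∫_0^T μ_{i,t} dt > 0`, every positive
solution of the Riccati system satisfies `P_{−,0} < 1`. -/
theorem stmt4 {E : Type} [MeasurableSpace E] {m n ℓ : ℕ}
    (hm : 0 < m) (hn : 0 < n) (hl : 0 < ℓ)
    (T : ℝ) (hT : 0 < T)
    (μ : ℝ → Fin m → ℝ) (σ : ℝ → Matrix (Fin m) (Fin n) ℝ)
    (ν : Fin ℓ → Measure E) [∀ j, IsFiniteMeasure (ν j)]
    (β : Fin ℓ → ℝ → E → Fin m → ℝ)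
    (hμmeas : Measurable μ) (hμbd : ∃ C, ∀ t ∈ Icc (0:ℝ) T, ∀ i, |μ t i| ≤ C)
    (hσmeas : ∀ i k, Measurable fun t => σ t i k)
    (hσbd : ∃ C, ∀ t ∈ Icc (0:ℝ) T, ∀ i k, |σ t i k| ≤ C)
    (hβmeas : ∀ j, Measurable (Function.uncurry (β j)))
    (hβbd : ∃ C, ∀ j, ∀ t ∈ Icc (0:ℝ) T, ∀ e i, |β j t e i| ≤ C)
    (hβgt : ∀ j, ∀ t ∈ Icc (0:ℝ) T, ∀ e i, -1 < β j t e i)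
    (δ : ℝ) (hδ : 0 < δ)
    (hell : ∀ t ∈ Icc (0:ℝ) T, ∀ v : Fin m → ℝ,
      δ * ∑ i, v i ^ 2 ≤ ∑ i, ∑ k, v i * SigmaMat σ ν β t i k * v k)
    (hfeas : 0 < ∑ i, ∫ t in (0:ℝ)..T, μ t i)
    (Pp Pm : ℝ → ℝ)
    (hsol : IsPositiveRiccatiSolution μ σ ν β T Pp Pm) :
    Pm 0 < 1 :=
  stmt4_general T hT μ σ ν β hμmeas hμbd hσmeas hβmeas hβbd δ hδ hell hfeas Pp Pm hsol
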